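/- Let k be a field, A a finite-dimensional associative k-algebra with a Frobenius functional τ_A : A → k, and B an A-algebra (an associative k-algebra with an algebra map A → B landing in the center) that is finitely generated free as an A-module and carries an A-linear functional τ_B : B → A which is Frobenius over A (i.e., b ↦ (b' ↦ τ_B(bb')) gives an isomorphism B ≅ Hom_A(B, A) of A-modules). Then τ_A ∘ τ_B : B → k is a Frobenius functional for B over k. -/
import Mathlib


/-- Transitivity of the Frobenius property: if `A` is a finite-dimensional `k`-algebra with
a Frobenius functional `τ_A : A → k`, and `B` is an `A`-algebra which is finite free as an
`A`-module with an `A`-linear Frobenius functional `τ_B : B → A`, then `τ_A ∘ τ_B : B → k`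
is a Frobenius functional for `B` over `k`. (Frobenius means the induced map
`r ↦ (r' ↦ τ(r r'))` to the appropriate module of homomorphisms is bijective.) -/
theorem frobenius_transitivity
    {k A B : Type*} [Field k] [CommRing A] [Algebra k A] [FiniteDimensional k A]
    [Ring B] [Algebra A B] [Algebra k B] [IsScalarTower k A B]
    [Module.Free A B] [Module.Finite A B]
    (τA : A →ₗ[k] k)
    (hA : Function.Bijective
      (((LinearMap.mul k A).compr₂ τA) : A → (A →ₗ[k] k)))
    (τB : B →ₗ[A] A)
    (hB : Function.Bijective
      (((LinearMap.mul A B).compr₂ τB) : B → (B →ₗ[A] A))) :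
    Function.Bijective
      (((LinearMap.mul k B).compr₂ (τA ∘ₗ (τB.restrictScalars k))) : B → (B →ₗ[k] k)) := by
  have hkB : Module.Finite k B := Module.Finite.trans A B
  set φ : B →ₗ[k] (B →ₗ[k] k) := ((LinearMap.mul k B).compr₂ (τA ∘ₗ (τB.restrictScalars k)))
  have hinj : Function.Injective φ := by
    rw [injective_iff_map_eq_zero]
    intro b hb
    have h1 : ∀ b' : B, τB (b * b') = 0 := by
      intro b'
      apply hA.injective
      rw [map_zero]
      ext a
      have := congrFun (congrArg DFunLike.coe hb) (a • b')
      simp only [φ, LinearMap.compr₂_apply, LinearMap.mul_apply', LinearMap.comp_apply,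
        LinearMap.zero_apply, LinearMap.restrictScalars_apply, mul_smul_comm, map_smul,
        smul_eq_mul] at this ⊢
      rw [mul_comm]
      exact this
    apply hB.injective
    rw [map_zero]
    ext b'
    simpa using h1 b'
  refine ⟨hinj, ?_⟩
  have hrank : Module.finrank k B = Module.finrank k (B →ₗ[k] k) :=
    (Subspace.dual_finrank_eq (K := k) (V := B)).symm
  exact (LinearMap.injective_iff_surjective_of_finrank_eq_finrank hrank).mp hinj
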